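/- Let X be a geodesic metric space and p ∈ X. Then m_p(x,x') equals the 'chain Gromov product' g_p^∞(x,x') := sup over finite chains x = x₀, ..., xₙ = x' of min over i of g_p(xᵢ, xᵢ₋₁). -/

import Mathlib

open scoped unitInterval

/-- A geodesic metric space: any two points are joined by a constant-speed
length-minimizing geodesic. -/
def IsGeodesicSpace (X : Type*) [MetricSpace X] : Prop :=
  ∀ x y : X, ∃ γ : Path x y, ∀ s t : unitInterval, dist (γ s) (γ t) = |(s : ℝ) - (t : ℝ)| * dist x y

/-- The minimum of `d(p,·)` along a path. -/
noncomputable def pathMin {X : Type*} [MetricSpace X] (p : X) {x x' : X} (γ : Path x x') : ℝ :=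
  sInf (Set.range fun t => dist p (γ t))

/-- `m_p(x,x')`: the supremum over continuous paths from `x` to `x'` of the minimum of
`d(p,·)` along the path. -/
noncomputable def mFn {X : Type*} [MetricSpace X] (p x x' : X) : ℝ :=
  sSup {m | ∃ γ : Path x x', m = pathMin p γ}

/-- The Gromov product `g_p(x,x') = (d(p,x) + d(p,x') - d(x,x'))/2`. -/
noncomputable def gromovProd {X : Type*} [MetricSpace X] (p x x' : X) : ℝ :=
  (dist p x + dist p x' - dist x x') / 2

/-- The chain Gromov product `g_p^∞(x,x')`: supremum over finite chains from `x` to `x'`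
of the minimum of consecutive Gromov products. -/
noncomputable def chainGromovProd {X : Type*} [MetricSpace X] (p x x' : X) : ℝ :=
  sSup {m | ∃ (n : ℕ) (c : Fin (n + 2) → X), c 0 = x ∧ c (Fin.last (n + 1)) = x' ∧
    m = Finset.univ.inf' Finset.univ_nonempty
      fun i : Fin (n + 1) => gromovProd p (c i.castSucc) (c i.succ)}

section Aux

variable {X : Type*} [MetricSpace X]

lemma pathMin_bddBelow (p : X) {x x' : X} (γ : Path x x') :
    BddBelow (Set.range fun t => dist p (γ t)) :=
  ⟨0, by rintro _ ⟨t, rfl⟩; exact dist_nonneg⟩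

lemma pathMin_le_dist (p : X) {x x' : X} (γ : Path x x') (t : unitInterval) :
    pathMin p γ ≤ dist p (γ t) :=
  csInf_le (pathMin_bddBelow p γ) ⟨t, rfl⟩

lemma le_pathMin (p : X) {x x' : X} (γ : Path x x') {m : ℝ}
    (h : ∀ t, m ≤ dist p (γ t)) : m ≤ pathMin p γ :=
  le_csInf (Set.range_nonempty _) (by rintro _ ⟨t, rfl⟩; exact h t)

lemma gromovProd_le_dist_left (p a b : X) : gromovProd p a b ≤ dist p a := by
  have := dist_triangle p a b
  unfold gromovProd
  linarith

lemma exists_path_ge (hX : IsGeodesicSpace X) (p a b : X) :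
    ∃ γ : Path a b, ∀ t, gromovProd p a b ≤ dist p (γ t) := by
  obtain ⟨γ, hγ⟩ := hX a b
  refine ⟨γ, fun t => ?_⟩
  have ht0 : (0:ℝ) ≤ t := t.2.1
  have ht1 : (t:ℝ) ≤ 1 := t.2.2
  have e0 : dist a (γ t) = (t : ℝ) * dist a b := by
    have h := hγ 0 t
    rw [γ.source] at h
    rw [h]
    have h' : |((0:unitInterval):ℝ) - (t:ℝ)| = (t:ℝ) := by
      rw [show ((0:unitInterval):ℝ) = 0 from rfl, zero_sub, abs_neg, abs_of_nonneg ht0]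
    rw [h']
  have e1 : dist (γ t) b = (1 - (t : ℝ)) * dist a b := by
    have h := hγ t 1
    rw [γ.target] at h
    rw [h]
    have h' : |(t:ℝ) - ((1:unitInterval):ℝ)| = 1 - (t:ℝ) := by
      rw [show ((1:unitInterval):ℝ) = 1 from rfl, abs_of_nonpos (by linarith), neg_sub]
    rw [h']
  have esum : dist a (γ t) + dist (γ t) b = dist a b := by
    rw [e0, e1]; ring
  have t1 : dist p a ≤ dist p (γ t) + dist (γ t) a := dist_triangle p (γ t) a
  have t2 : dist p b ≤ dist p (γ t) + dist (γ t) b := dist_triangle p (γ t) b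
  have hc : dist (γ t) a = dist a (γ t) := dist_comm _ _
  unfold gromovProd
  linarith

lemma exists_chain_path (hX : IsGeodesicSpace X) (p : X) :
    ∀ (n : ℕ) (c : Fin (n + 2) → X),
      ∃ γ : Path (c 0) (c (Fin.last (n + 1))),
        ∀ t, (Finset.univ.inf' Finset.univ_nonempty
          fun i : Fin (n + 1) => gromovProd p (c i.castSucc) (c i.succ)) ≤ dist p (γ t) := by
  intro n
  induction n with
  | zero =>
      intro c
      obtain ⟨γ, hγ⟩ := exists_path_ge hX p (c 0) (c (Fin.last 1))
      refine ⟨γ, fun t => le_trans ?_ (hγ t)⟩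
      have h0 := Finset.inf'_le (b := (0 : Fin 1))
        (fun i : Fin 1 => gromovProd p (c i.castSucc) (c i.succ)) (Finset.mem_univ _)
      convert h0 using 2 <;> rfl
  | succ n ih =>
      intro c
      obtain ⟨γ₁, hγ₁⟩ := exists_path_ge hX p (c 0) (c 1)
      obtain ⟨γ₂, hγ₂⟩ := ih (fun i => c i.succ)
      have hx : c 1 = c ((0 : Fin (n + 2)).succ) := by rw [Fin.succ_zero_eq_one]
      have hy : c (Fin.last (n + 2)) = c ((Fin.last (n + 1)).succ) := by rw [Fin.succ_last]
      refine ⟨γ₁.trans (γ₂.cast hx hy), fun t => ?_⟩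
      have hmem : (γ₁.trans (γ₂.cast hx hy)) t ∈ Set.range γ₁ ∪ Set.range γ₂ := by
        have h1 : (γ₁.trans (γ₂.cast hx hy)) t ∈ Set.range (γ₁.trans (γ₂.cast hx hy)) :=
          Set.mem_range_self t
        rw [Path.trans_range] at h1
        rcases h1 with h | h
        · exact Or.inl h
        · right
          obtain ⟨s, hs⟩ := h
          exact ⟨s, by rw [← hs]; rfl⟩
      rcases hmem with ⟨s, hs⟩ | ⟨s, hs⟩
      · rw [← hs]
        refine le_trans ?_ (hγ₁ s)
        have h0 := Finset.inf'_le (b := (0 : Fin (n + 2)))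
          (fun i : Fin (n + 2) => gromovProd p (c i.castSucc) (c i.succ))
          (Finset.mem_univ _)
        simpa only [Fin.castSucc_zero, Fin.succ_zero_eq_one] using h0
      · rw [← hs]
        refine le_trans ?_ (hγ₂ s)
        refine Finset.le_inf' _ _ fun j _ => ?_
        have h0 := Finset.inf'_le (b := j.succ)
          (fun i : Fin (n + 2) => gromovProd p (c i.castSucc) (c i.succ))
          (Finset.mem_univ _)
        refine le_trans h0 (le_of_eq ?_)
        show gromovProd p (c j.succ.castSucc) (c j.succ.succ)
          = gromovProd p (c j.castSucc.succ) (c j.succ.succ)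
        rw [Fin.succ_castSucc]

lemma mFn_bddAbove (p x x' : X) :
    BddAbove {m | ∃ γ : Path x x', m = pathMin p γ} := by
  refine ⟨dist p x, ?_⟩
  rintro m ⟨γ, rfl⟩
  have h := pathMin_le_dist p γ 0
  rwa [γ.source] at h

lemma chain_bddAbove (p x x' : X) :
    BddAbove {m | ∃ (n : ℕ) (c : Fin (n + 2) → X), c 0 = x ∧ c (Fin.last (n + 1)) = x' ∧
      m = Finset.univ.inf' Finset.univ_nonempty
        fun i : Fin (n + 1) => gromovProd p (c i.castSucc) (c i.succ)} := by
  refine ⟨dist p x, ?_⟩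
  rintro m ⟨n, c, hc0, hcl, rfl⟩
  have h0 := Finset.inf'_le (b := (0 : Fin (n + 1)))
    (fun i : Fin (n + 1) => gromovProd p (c i.castSucc) (c i.succ)) (Finset.mem_univ _)
  have h1 : gromovProd p (c (0 : Fin (n + 1)).castSucc) (c (0 : Fin (n + 1)).succ)
      ≤ dist p x := by
    rw [show (0 : Fin (n + 1)).castSucc = 0 from rfl, hc0]
    exact gromovProd_le_dist_left p x _
  exact le_trans h0 h1

lemma pathMin_le_chainGromovProd (p x x' : X) (γ : Path x x') :
    pathMin p γ ≤ chainGromovProd p x x' := by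
  refine le_of_forall_pos_le_add fun ε hε => ?_
  have huc : UniformContinuous γ := CompactSpace.uniformContinuous_of_continuous γ.continuous
  obtain ⟨δ, hδ, hδε⟩ := Metric.uniformContinuous_iff.mp huc ε hε
  obtain ⟨n, hn⟩ := exists_nat_one_div_lt hδ
  have hN0 : (0:ℝ) < (n : ℝ) + 1 := by positivity
  have hmemI : ∀ i : Fin (n + 2), (i : ℝ) / ((n : ℝ) + 1) ∈ unitInterval := by
    intro i
    constructor
    · positivity
    · rw [div_le_one hN0]
      have : (i : ℕ) ≤ n + 1 := Nat.le_of_lt_succ i.isLt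
      exact_mod_cast this
  set f : Fin (n + 2) → unitInterval := fun i => ⟨(i : ℝ) / ((n : ℝ) + 1), hmemI i⟩ with hf
  set c : Fin (n + 2) → X := fun i => γ (f i) with hc
  have hc0 : c 0 = x := by
    have : f 0 = 0 := by
      apply Subtype.ext
      show ((0 : Fin (n+2)) : ℝ) / ((n : ℝ) + 1) = 0
      norm_num
    rw [hc]
    simp only [this]
    exact γ.source
  have hcl : c (Fin.last (n + 1)) = x' := by
    have : f (Fin.last (n + 1)) = 1 := by
      apply Subtype.ext
      show ((Fin.last (n+1) : Fin (n+2)) : ℝ) / ((n : ℝ) + 1) = 1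
      rw [Fin.val_last]
      push_cast
      field_simp
    rw [hc]
    simp only [this]
    exact γ.target
  have hmem : (Finset.univ.inf' Finset.univ_nonempty
      fun i : Fin (n + 1) => gromovProd p (c i.castSucc) (c i.succ)) ∈
      {m | ∃ (N : ℕ) (c : Fin (N + 2) → X), c 0 = x ∧ c (Fin.last (N + 1)) = x' ∧
        m = Finset.univ.inf' Finset.univ_nonempty
          fun i : Fin (N + 1) => gromovProd p (c i.castSucc) (c i.succ)} :=
    ⟨n, c, hc0, hcl, rfl⟩
  have hlow : pathMin p γ - ε ≤ Finset.univ.inf' Finset.univ_nonempty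
      fun i : Fin (n + 1) => gromovProd p (c i.castSucc) (c i.succ) := by
    refine Finset.le_inf' _ _ fun i _ => ?_
    have d1 : pathMin p γ ≤ dist p (c i.castSucc) := pathMin_le_dist p γ (f i.castSucc)
    have d2 : pathMin p γ ≤ dist p (c i.succ) := pathMin_le_dist p γ (f i.succ)
    have dd : dist (c i.castSucc) (c i.succ) < ε := by
      apply hδε
      rw [Subtype.dist_eq, Real.dist_eq]
      show |(i.castSucc : ℝ) / ((n:ℝ)+1) - (i.succ : ℝ) / ((n:ℝ)+1)| < δ
      rw [Fin.coe_castSucc, Fin.val_succ, div_sub_div_same]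
      push_cast
      rw [show (i:ℝ) - ((i:ℝ) + 1) = -1 by ring]
      rw [abs_div, abs_neg, abs_one, abs_of_pos hN0]
      exact hn
    unfold gromovProd
    linarith
  have hle : (Finset.univ.inf' Finset.univ_nonempty
      fun i : Fin (n + 1) => gromovProd p (c i.castSucc) (c i.succ)) ≤ chainGromovProd p x x' :=
    le_csSup (chain_bddAbove p x x') hmem
  linarith

end Aux

/-- in a geodesic space, `m_p = g_p^∞`. -/
theorem mFn_eq_chainGromovProd {X : Type*} [MetricSpace X] (hX : IsGeodesicSpace X)
    (p x x' : X) : mFn p x x' = chainGromovProd p x x' := by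
  obtain ⟨γ₀, -⟩ := hX x x'
  apply le_antisymm
  · refine csSup_le ⟨pathMin p γ₀, γ₀, rfl⟩ ?_
    rintro m ⟨γ, rfl⟩
    exact pathMin_le_chainGromovProd p x x' γ
  · have hne : {m | ∃ (n : ℕ) (c : Fin (n + 2) → X), c 0 = x ∧ c (Fin.last (n + 1)) = x' ∧
        m = Finset.univ.inf' Finset.univ_nonempty
          fun i : Fin (n + 1) => gromovProd p (c i.castSucc) (c i.succ)}.Nonempty := by
      refine ⟨_, 0, ![x, x'], ?_, ?_, rfl⟩
      · rfl
      · rfl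
    refine csSup_le hne ?_
    rintro m ⟨n, c, hc0, hcl, rfl⟩
    obtain ⟨γ, hγ⟩ := exists_chain_path hX p n c
    have hpm : (Finset.univ.inf' Finset.univ_nonempty
        fun i : Fin (n + 1) => gromovProd p (c i.castSucc) (c i.succ)) ≤ pathMin p γ :=
      le_pathMin p γ hγ
    have : pathMin p γ ≤ mFn p x x' := by
      have := mFn_bddAbove p x x'
      have hmem : pathMin p γ ∈ {m | ∃ δ : Path x x', m = pathMin p δ} := by
        refine ⟨γ.cast hc0.symm hcl.symm, ?_⟩
        unfold pathMin
        rw [Path.cast_coe]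
      exact le_csSup (mFn_bddAbove p x x') hmem
    exact le_trans hpm this
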